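/- arXiv:1203.5323 — 7 statements merged into one kernel-verified Lean document; each statement's English description precedes it below -/
import Mathlib

section
/- For all positive integers m and k, every W[2]-parameterized Resolution refutation of (Θ_{m,k}, k) has size at least m^{k+1}. (Observation 1.) -/
/-- A clause is a finite set of literals; a literal is a pair (variable, polarity). -/
abbrev Clause (V : Type) := Finset (V × Bool)

/-- An assignment satisfies a clause if it makes some literal of the clause true. -/
def satClause {V : Type} (α : V → Bool) (C : Clause V) : Prop :=
  ∃ l ∈ C, α l.1 = l.2

/-- An assignment satisfies a CNF (a set of clauses) if it satisfies every clause. -/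
def satCNF {V : Type} (α : V → Bool) (F : Set (Clause V)) : Prop :=
  ∀ C ∈ F, satClause α C

/-- A Resolution refutation of a set `F` of clauses: a finite sequence of clauses ending in
the empty clause, each clause being an axiom of `F`, a resolvent of two earlier clauses
(from `P ∨ x` and `Q ∨ ¬x` derive `P ∨ Q`), or a weakening of an earlier clause
(from `P` derive `P ∨ l`). Its size is the length of the sequence. -/
structure ResRefutation {V : Type} [DecidableEq V] (F : Set (Clause V)) where
  seq : List (Clause V)
  ne : seq ≠ []
  lastEmpty : seq.getLast ne = (∅ : Clause V)
  valid : ∀ i (hi : i < seq.length),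
    (seq[i]'hi ∈ F) ∨
    (∃ (j l : ℕ) (hj : j < i) (hl : l < i) (x : V) (P Q : Clause V),
      seq[j]'(hj.trans hi) = insert (x, true) P ∧
      seq[l]'(hl.trans hi) = insert (x, false) Q ∧
      seq[i]'hi = P ∪ Q) ∨
    (∃ (j : ℕ) (hj : j < i) (lit : V × Bool),
      seq[i]'hi = insert lit (seq[j]'(hj.trans hi)))

/-- The size of a Resolution refutation: the length of its sequence of clauses. -/
def ResRefutation.size {V : Type} [DecidableEq V] {F : Set (Clause V)}
    (π : ResRefutation F) : ℕ :=
  π.seq.length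

/-- Tree-Resolution derivations from the clause set `F`: each clause occurrence is used as a
premise of at most one inference. A tree-Resolution refutation of `F` is a `ResTree F ∅`. -/
inductive ResTree {V : Type} [DecidableEq V] (F : Set (Clause V)) : Clause V → Type where
  | ax (C : Clause V) (h : C ∈ F) : ResTree F C
  | res (x : V) (P Q : Clause V) (t₁ : ResTree F (insert (x, true) P))
      (t₂ : ResTree F (insert (x, false) Q)) : ResTree F (P ∪ Q)
  | weak (l : V × Bool) (C : Clause V) (t : ResTree F C) : ResTree F (insert l C)

/-- The size of a tree-Resolution derivation: its number of clause occurrences. -/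
def ResTree.size {V : Type} [DecidableEq V] {F : Set (Clause V)} :
    ∀ {C : Clause V}, ResTree F C → ℕ
  | _, .ax _ _ => 1
  | _, .res _ _ _ t₁ t₂ => t₁.size + t₂.size + 1
  | _, .weak _ _ t => t.size + 1

/-- The clauses `¬x_{i₁} ∨ ⋯ ∨ ¬x_{i_{k+1}}` over the variables in `Vars`. -/
def negClausesOn {V : Type} [DecidableEq V] (Vars : Finset V) (k : ℕ) : Set (Clause V) :=
  {C | ∃ S : Finset V, S ⊆ Vars ∧ S.card = k + 1 ∧ C = S.image (fun v => (v, false))}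

/-- The clauses `x_{i₁} ∨ ⋯ ∨ x_{i_{n-k+1}}` over the `n` variables in `Vars`. -/
def posClausesOn {V : Type} [DecidableEq V] (Vars : Finset V) (k : ℕ) : Set (Clause V) :=
  {C | ∃ S : Finset V, S ⊆ Vars ∧ S.card = Vars.card - k + 1 ∧ C = S.image (fun v => (v, true))}

/-- The weight of an assignment: the number of the `n` variables set to true. -/
def weight (n : ℕ) (α : ℕ → Bool) : ℕ :=
  ((Finset.range n).filter (fun i => α i = true)).card
/-- `Θ_{m,k}`: the CNF in the `n = m(k+1)` variables `v^j_i = m*i + j` (`i < k+1`, `j < m`),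
with the `k+1` clauses `v^1_i ∨ ⋯ ∨ v^m_i`. -/
def Theta (m k : ℕ) : Set (Clause ℕ) :=
  {C | ∃ i, i < k + 1 ∧ C = (Finset.range m).image (fun j => (m * i + j, true))}

/-- `Γ_Θ`: the `m^{k+1}` clauses `¬v^{a_1}_1 ∨ ⋯ ∨ ¬v^{a_{k+1}}_{k+1}` with `a_i ∈ [m]`. -/
def GammaTheta (m k : ℕ) : Set (Clause ℕ) :=
  {C | ∃ a : ℕ → ℕ, (∀ i, i < k + 1 → a i < m) ∧
    C = (Finset.range (k + 1)).image (fun i => (m * i + a i, false))}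

/-- `Ψ_{n,k}` (for `n` even): the CNF in variables `v_0, …, v_{n-1}` with clauses
`v_{2i} ∨ ¬v_{2i+1}` and `v_{2i+1} ∨ ¬v_{2i}` (i.e. `v_{2i} ↔ v_{2i+1}`). -/
def Psi (n : ℕ) : Set (Clause ℕ) :=
  {C | ∃ i, 2 * i + 1 < n ∧
    (C = {(2 * i, true), (2 * i + 1, false)} ∨ C = {(2 * i + 1, true), (2 * i, false)})}

/-- `Γ_Ψ` (for `k` odd): the `binom(n/2, (k+1)/2)` clauses
`¬v_{2a_1} ∨ ¬v_{2a_1+1} ∨ ⋯ ∨ ¬v_{2a_{(k+1)/2}} ∨ ¬v_{2a_{(k+1)/2}+1}` over sets `A` of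
`(k+1)/2` pairs. -/
def GammaPsi (n k : ℕ) : Set (Clause ℕ) :=
  {C | ∃ A : Finset ℕ, A ⊆ Finset.range (n / 2) ∧ A.card = (k + 1) / 2 ∧
    C = (A.biUnion (fun a => ({2 * a, 2 * a + 1} : Finset ℕ))).image (fun v => (v, false))}

/-!
A Resolution refutation is sound, so every assignment falsifies some axiom occurring in it.
For `a : Fin (k + 1) → Fin m`, the assignment that sets exactly the `k + 1` variables
`v^{a_i}_i` to true satisfies every clause of `Θ_{m,k}`, and among the clauses
`¬x_{i₁} ∨ ⋯ ∨ ¬x_{i_{k+1}}` it falsifies only the one on those variables. So all `m^{k+1}`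
clauses `¬v^{a_1}_1 ∨ ⋯ ∨ ¬v^{a_{k+1}}_{k+1}` occur in the refutation.
-/

section Soundness

variable {V : Type}

theorem satClause.mono {α : V → Bool} {C D : Clause V} (h : C ⊆ D) (hC : satClause α C) :
    satClause α D :=
  let ⟨l, hl, hα⟩ := hC
  ⟨l, h hl, hα⟩

theorem satClause_insert_iff [DecidableEq V] {α : V → Bool} {l : V × Bool} {C : Clause V} :
    satClause α (insert l C) ↔ α l.1 = l.2 ∨ satClause α C := by
  simp [satClause]

theorem satClause_union_of_resolve [DecidableEq V] {α : V → Bool} {x : V} {P Q : Clause V}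
    (hP : satClause α (insert (x, true) P)) (hQ : satClause α (insert (x, false) Q)) :
    satClause α (P ∪ Q) := by
  rw [satClause_insert_iff] at hP hQ
  rcases hP with hx | ⟨l, hl, hα⟩
  · rcases hQ with hx' | ⟨l, hl, hα⟩
    · simp_all
    · exact ⟨l, Finset.mem_union_right P hl, hα⟩
  · exact ⟨l, Finset.mem_union_left Q hl, hα⟩

theorem satClause_image_false_iff [DecidableEq V] {α : V → Bool} {S : Finset V} :
    satClause α (S.image fun v => (v, false)) ↔ ∃ v ∈ S, α v = false := by
  simp [satClause]

theorem ResRefutation.satClause_getElem [DecidableEq V] {F : Set (Clause V)}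
    (π : ResRefutation F) {α : V → Bool} (hF : ∀ C ∈ π.seq, C ∈ F → satClause α C) :
    ∀ i (hi : i < π.seq.length), satClause α π.seq[i] := by
  intro i
  induction i using Nat.strong_induction_on with
  | _ i ih =>
    intro hi
    rcases π.valid i hi with hax | ⟨j, l, hj, hl, x, P, Q, hP, hQ, hres⟩ | ⟨j, hj, lit, hweak⟩
    · exact hF _ (List.getElem_mem hi) hax
    · rw [hres]
      exact satClause_union_of_resolve (hP ▸ ih j hj _) (hQ ▸ ih l hl _)
    · rw [hweak]
      exact (ih j hj _).mono (Finset.subset_insert _ _)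

theorem ResRefutation.exists_mem_not_satClause [DecidableEq V] {F : Set (Clause V)}
    (π : ResRefutation F) (α : V → Bool) : ∃ C ∈ π.seq, C ∈ F ∧ ¬satClause α C := by
  by_contra! hF
  have hlast := π.satClause_getElem hF (π.seq.length - 1)
    (Nat.sub_one_lt (List.length_pos_iff.2 π.ne).ne')
  rw [← List.getLast_eq_getElem π.ne, π.lastEmpty] at hlast
  obtain ⟨l, hl, -⟩ := hlast
  exact Finset.notMem_empty l hl

theorem ResRefutation.card_le_size [DecidableEq V] {F : Set (Clause V)} (π : ResRefutation F)
    {ι : Type} [Fintype ι] {f : ι → Clause V} (hf : Function.Injective f)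
    (hmem : ∀ a, f a ∈ π.seq) : Fintype.card ι ≤ π.size := by
  classical
  calc Fintype.card ι ≤ π.seq.toFinset.card :=
        Finset.card_le_card_of_injOn f (fun a _ => List.mem_toFinset.2 (hmem a)) hf.injOn
    _ ≤ π.size := π.seq.toFinset_card_le

end Soundness

theorem negClausesOn_eq_of_not_satClause {V : Type} [DecidableEq V] {Vars T : Finset V} {k : ℕ}
    (hT : T.card = k + 1) {C : Clause V} (hC : C ∈ negClausesOn Vars k)
    (hsat : ¬satClause (fun v => decide (v ∈ T)) C) : C = T.image fun v => (v, false) := by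
  obtain ⟨S, -, hS, rfl⟩ := hC
  have hST : S ⊆ T := fun v hv => by
    by_contra hvT
    exact hsat (satClause_image_false_iff.2 ⟨v, hv, by simpa using hvT⟩)
  rw [Finset.eq_of_subset_of_card_le hST (hT.trans hS.symm).le]

section Theta

variable {m k : ℕ}

theorem eq_and_eq_of_mul_add_eq {i j r s : ℕ} (hr : r < m) (hs : s < m)
    (h : m * i + r = m * j + s) : i = j ∧ r = s := by
  have hm : 0 < m := by omega
  have hij : i = j := by
    have := congrArg (· / m) h
    simpa [Nat.mul_add_div hm, Nat.div_eq_of_lt hr, Nat.div_eq_of_lt hs] using this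
  subst hij
  exact ⟨rfl, by omega⟩

def thetaTransversal (a : Fin (k + 1) → Fin m) : Finset ℕ :=
  Finset.univ.image fun i => m * i + a i

theorem mem_thetaTransversal {a : Fin (k + 1) → Fin m} {v : ℕ} :
    v ∈ thetaTransversal a ↔ ∃ i, m * i + a i = v := by
  simp [thetaTransversal]

theorem card_thetaTransversal (a : Fin (k + 1) → Fin m) : (thetaTransversal a).card = k + 1 := by
  rw [thetaTransversal, Finset.card_image_of_injective, Finset.card_univ, Fintype.card_fin]
  intro i j hij
  exact Fin.ext (eq_and_eq_of_mul_add_eq (a i).2 (a j).2 hij).1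

theorem thetaTransversal_injective :
    Function.Injective (thetaTransversal : (Fin (k + 1) → Fin m) → Finset ℕ) := by
  intro a b hab
  funext i
  obtain ⟨j, hj⟩ := mem_thetaTransversal.1 (hab ▸ mem_thetaTransversal.2 ⟨i, rfl⟩ :
    m * i + a i ∈ thetaTransversal b)
  obtain ⟨hji, hba⟩ := eq_and_eq_of_mul_add_eq (b j).2 (a i).2 hj
  obtain rfl : j = i := Fin.ext hji
  exact Fin.ext hba.symm

theorem satCNF_theta_thetaTransversal (a : Fin (k + 1) → Fin m) :
    satCNF (fun v => decide (v ∈ thetaTransversal a)) (Theta m k) := by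
  rintro C ⟨i, hi, rfl⟩
  refine ⟨(m * i + a ⟨i, hi⟩, true), Finset.mem_image.2 ⟨a ⟨i, hi⟩, by simp, rfl⟩, ?_⟩
  simpa using mem_thetaTransversal.2 ⟨⟨i, hi⟩, rfl⟩

end Theta

theorem theta_W2_lower_bound_general (m k : ℕ)
    (π : ResRefutation (Theta m k ∪ negClausesOn (Finset.range (m * (k + 1))) k)) :
    m ^ (k + 1) ≤ π.size := by
  classical
  have hmem : ∀ a : Fin (k + 1) → Fin m,
      (thetaTransversal a).image (fun v => (v, false)) ∈ π.seq := by
    intro a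
    obtain ⟨C, hCπ, hC, hsat⟩ := π.exists_mem_not_satClause fun v => decide (v ∈ thetaTransversal a)
    rcases hC with hΘ | hneg
    · exact absurd (satCNF_theta_thetaTransversal a C hΘ) hsat
    · rwa [← negClausesOn_eq_of_not_satClause (card_thetaTransversal a) hneg hsat]
  have hinj : Function.Injective fun a : Fin (k + 1) → Fin m =>
      (thetaTransversal a).image (fun v => (v, false)) :=
    (Finset.image_injective fun _ _ h => (Prod.ext_iff.1 h).1).comp thetaTransversal_injective
  simpa [Fintype.card_fun] using π.card_le_size hinj hmem

/-- Observation 1: for all positive integers `m` and `k`, every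
`W[2]`-parameterized Resolution refutation of `(Θ_{m,k}, k)` — i.e. every Resolution
refutation of `Θ_{m,k}` together with the clauses `¬x_{i₁} ∨ ⋯ ∨ ¬x_{i_{k+1}}` over its
`n = m(k+1)` variables — has size at least `m^(k+1)`. -/
theorem theta_W2_lower_bound (m k : ℕ) (hm : 0 < m) (hk : 0 < k)
    (π : ResRefutation (Theta m k ∪ negClausesOn (Finset.range (m * (k + 1))) k)) :
    m ^ (k + 1) ≤ π.size :=
  theta_W2_lower_bound_general m k π
end

section
/- Let N be the set of all clauses ¬x_{i_1}∨⋯∨¬x_{i_{k+1}} over the variables of Θ_{m,k}, and let Γ_Θ ⊆ N be the set of the m^{k+1} clauses ¬v^{a_1}_1∨⋯∨¬v^{a_{k+1}}_{k+1} with a_1,…,a_{k+1} ∈ [m]. Then for every clause γ ∈ Γ_Θ, the set of clauses Θ_{m,k} ∪ (N ∖ {γ}) is satisfiable (witnessed by the assignment that sets to true exactly the k+1 variables negated in γ). -/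
/-- for every clause `γ ∈ Γ_Θ`, the CNF consisting of `Θ_{m,k}` together
with all the negative clauses `¬x_{i₁} ∨ ⋯ ∨ ¬x_{i_{k+1}}` except `γ` is satisfiable,
witnessed by the assignment setting to true exactly the `k+1` variables negated in `γ`. -/
theorem theta_minus_one_gamma_satisfiable (m k : ℕ) (γ : Clause ℕ)
    (hγ : γ ∈ GammaTheta m k) :
    satCNF (fun v => decide ((v, false) ∈ γ))
      (Theta m k ∪ (negClausesOn (Finset.range (m * (k + 1))) k \ {γ})) := by
  obtain ⟨a, ha, rfl⟩ := hγ
  have hm : 0 < m := lt_of_le_of_lt (Nat.zero_le _) (ha 0 (Nat.succ_pos k))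
  intro C hC
  rcases hC with ⟨i, hi, rfl⟩ | ⟨⟨S, hS, hScard, rfl⟩, hne⟩
  · -- Theta clause i: satisfied by (m*i + a i, true)
    refine ⟨(m * i + a i, true), ?_, ?_⟩
    · exact Finset.mem_image.mpr ⟨a i, Finset.mem_range.mpr (ha i hi), rfl⟩
    · simp only [decide_eq_true_eq]
      exact Finset.mem_image.mpr ⟨i, Finset.mem_range.mpr hi, rfl⟩
  · -- negative clause ≠ γ
    set T : Finset ℕ := (Finset.range (k + 1)).image (fun i => m * i + a i) with hT
    have hinjT : Set.InjOn (fun i => m * i + a i) (Finset.range (k + 1)) := by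
      intro x hx y hy hxy
      simp only [Finset.coe_range, Set.mem_Iio] at hx hy
      have hxy' : m * x + a x = m * y + a y := hxy
      have hax := ha x hx
      have hay := ha y hy
      by_contra hxyne
      rcases Nat.lt_or_ge x y with h | h
      · have : m * x + a x < m * y + a y := by
          calc m * x + a x < m * x + m := by omega
            _ = m * (x + 1) := by ring
            _ ≤ m * y := Nat.mul_le_mul_left m h
            _ ≤ m * y + a y := Nat.le_add_right _ _
        omega
      · have h' : y < x := lt_of_le_of_ne h (Ne.symm hxyne)
        have : m * y + a y < m * x + a x := by
          calc m * y + a y < m * y + m := by omega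
            _ = m * (y + 1) := by ring
            _ ≤ m * x := Nat.mul_le_mul_left m h'
            _ ≤ m * x + a x := Nat.le_add_right _ _
        omega
    have hTcard : T.card = k + 1 := by
      rw [hT, Finset.card_image_of_injOn hinjT, Finset.card_range]
    have hγeq : (Finset.range (k + 1)).image (fun i => (m * i + a i, false))
        = T.image (fun v => (v, false)) := by
      rw [hT, Finset.image_image]; rfl
    have hSneT : S ≠ T := by
      intro h
      apply hne
      simp only [Set.mem_singleton_iff]
      rw [hγeq, h]
    have : ∃ v ∈ S, v ∉ T := by
      by_contra hcon
      push_neg at hcon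
      exact hSneT (Finset.eq_of_subset_of_card_le hcon (by omega))
    obtain ⟨v, hvS, hvT⟩ := this
    refine ⟨(v, false), Finset.mem_image.mpr ⟨v, hvS, rfl⟩, ?_⟩
    simp only [decide_eq_false_iff_not]
    intro hmem
    apply hvT
    rw [hγeq] at hmem
    obtain ⟨w, hw, hweq⟩ := Finset.mem_image.mp hmem
    have : w = v := (Prod.mk.injEq _ _ _ _).mp hweq |>.1
    rwa [← this]
end

section
/- Let k be odd, n even, k+1 ≤ n. Let N be the set of all clauses ¬v_{i_1}∨⋯∨¬v_{i_{k+1}} over v_1,…,v_n, let P be the set of all clauses v_{i_1}∨⋯∨v_{i_{n-k+1}} over v_1,…,v_n, and let Γ_Ψ ⊆ N be as defined. Then for every clause γ ∈ Γ_Ψ, the set of clauses Ψ_{n,k} ∪ (N ∖ {γ}) ∪ P is satisfiable (witnessed by the assignment that sets to true exactly the k+1 variables negated in γ). -/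
/-- for `k` odd, `n` even, `k+1 ≤ n`: for every clause `γ ∈ Γ_Ψ`, the CNF
consisting of `Ψ_{n,k}`, all the negative clauses `¬v_{i₁} ∨ ⋯ ∨ ¬v_{i_{k+1}}` except `γ`,
and all the positive clauses `v_{i₁} ∨ ⋯ ∨ v_{i_{n-k+1}}`, is satisfiable, witnessed by
the assignment setting to true exactly the `k+1` variables negated in `γ`. -/
theorem psi_minus_one_gamma_satisfiable (n k : ℕ) (hk : Odd k) (hn : Even n)
    (hkn : k + 1 ≤ n) (γ : Clause ℕ) (hγ : γ ∈ GammaPsi n k) :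
    satCNF (fun v => decide ((v, false) ∈ γ))
      (Psi n ∪ (negClausesOn (Finset.range n) k \ {γ}) ∪ posClausesOn (Finset.range n) k) := by
  obtain ⟨A, hA, hAcard, rfl⟩ := hγ
  set B := A.biUnion (fun a => ({2 * a, 2 * a + 1} : Finset ℕ)) with hBdef
  have hmemB : ∀ v, v ∈ B ↔ ∃ a ∈ A, v = 2 * a ∨ v = 2 * a + 1 := by
    intro v; simp [hBdef, Finset.mem_biUnion]
  have hmemγ : ∀ v, ((v, false) ∈ B.image (fun v => (v, false))) ↔ v ∈ B := by
    intro v; simp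
  have hlink : ∀ i, (2 * i ∈ B ↔ i ∈ A) ∧ (2 * i + 1 ∈ B ↔ i ∈ A) := by
    intro i
    constructor <;> rw [hmemB] <;> constructor
    · rintro ⟨a, ha, h⟩
      have : i = a := by omega
      rwa [this]
    · intro h; exact ⟨i, h, Or.inl rfl⟩
    · rintro ⟨a, ha, h⟩
      have : i = a := by omega
      rwa [this]
    · intro h; exact ⟨i, h, Or.inr rfl⟩
  have hBcard : B.card = k + 1 := by
    obtain ⟨t, rfl⟩ := hk
    rw [hBdef, Finset.card_biUnion]
    · have : ∀ a ∈ A, ({2 * a, 2 * a + 1} : Finset ℕ).card = 2 := by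
        intro a _
        rw [Finset.card_insert_of_notMem (by simp), Finset.card_singleton]
      rw [Finset.sum_congr rfl this, Finset.sum_const, hAcard, smul_eq_mul]
      omega
    · intro a ha b hb hab
      simp only [Finset.disjoint_left, Finset.mem_insert, Finset.mem_singleton]
      omega
  have hBsub : B ⊆ Finset.range n := by
    intro v hv
    rw [hmemB] at hv
    obtain ⟨a, ha, h⟩ := hv
    have := hA ha
    rw [Finset.mem_range] at this ⊢
    obtain ⟨m, rfl⟩ := hn
    omega
  intro C hC
  rcases hC with (hC | hC) | hC
  · -- Psi
    obtain ⟨i, hi, hC | hC⟩ := hC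
    · by_cases h : 2 * i ∈ B
      · exact ⟨(2 * i, true), by simp [hC], by simp [hmemγ, h]⟩
      · have h2 : 2 * i + 1 ∉ B := fun hh => h (((hlink i).1).2 (((hlink i).2).1 hh))
        exact ⟨(2 * i + 1, false), by simp [hC], by simp [hmemγ, h2]⟩
    · by_cases h : 2 * i + 1 ∈ B
      · exact ⟨(2 * i + 1, true), by simp [hC], by simp [hmemγ, h]⟩
      · have h2 : 2 * i ∉ B := fun hh => h (((hlink i).2).2 (((hlink i).1).1 hh))
        exact ⟨(2 * i, false), by simp [hC], by simp [hmemγ, h2]⟩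
  · -- negative clauses minus γ
    obtain ⟨⟨S, hS, hScard, rfl⟩, hne⟩ := hC
    have hnsub : ¬ S ⊆ B := by
      intro hsub
      have : S = B := Finset.eq_of_subset_of_card_le hsub (by omega)
      exact hne (by simp [this])
    obtain ⟨v, hvS, hvB⟩ := Finset.not_subset.mp hnsub
    refine ⟨(v, false), Finset.mem_image_of_mem _ hvS, ?_⟩
    simp [hmemγ, hvB]
  · -- positive clauses
    obtain ⟨S, hS, hScard, rfl⟩ := hC
    rw [Finset.card_range] at hScard
    have hunion : (S ∪ B).card ≤ n := by
      calc (S ∪ B).card ≤ (Finset.range n).card :=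
            Finset.card_le_card (Finset.union_subset hS hBsub)
        _ = n := Finset.card_range n
    have hint : 0 < (S ∩ B).card := by
      have := Finset.card_union_add_card_inter S B
      omega
    obtain ⟨v, hv⟩ := Finset.card_pos.mp hint
    rw [Finset.mem_inter] at hv
    refine ⟨(v, true), Finset.mem_image_of_mem _ hv.1, ?_⟩
    simp [hmemγ, hv.2]
end

section
/- Let k be odd, n even, k+1 ≤ n. Let P be the set of all clauses v_{i_1}∨⋯∨v_{i_{n-k+1}} over v_1,…,v_n and let Γ_Ψ be as defined. Then Ψ_{n,k} ∪ Γ_Ψ ∪ P is unsatisfiable. -/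
/-- for `k` odd, `n` even, `k+1 ≤ n`: the CNF `Ψ_{n,k} ∪ Γ_Ψ ∪ P`, where
`P` is the set of all positive clauses `v_{i₁} ∨ ⋯ ∨ v_{i_{n-k+1}}` over `v_1, …, v_n`,
is unsatisfiable. -/
theorem psi_union_gamma_pos_unsatisfiable (n k : ℕ) (hk : Odd k) (hn : Even n)
    (hkn : k + 1 ≤ n) (α : ℕ → Bool) :
    ¬ satCNF α (Psi n ∪ GammaPsi n k ∪ posClausesOn (Finset.range n) k) := by
  intro h
  -- pairs are equal
  have hpair : ∀ i, 2 * i + 1 < n → α (2 * i) = α (2 * i + 1) := by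
    intro i hi
    have h1 := h {(2 * i, true), (2 * i + 1, false)}
      (Or.inl (Or.inl ⟨i, hi, Or.inl rfl⟩))
    have h2 := h {(2 * i + 1, true), (2 * i, false)}
      (Or.inl (Or.inl ⟨i, hi, Or.inr rfl⟩))
    obtain ⟨l1, hl1, he1⟩ := h1
    obtain ⟨l2, hl2, he2⟩ := h2
    simp only [Finset.mem_insert, Finset.mem_singleton] at hl1 hl2
    rcases hl1 with rfl | rfl <;> rcases hl2 with rfl | rfl <;>
      simp_all
  -- false variables ≤ n - k
  set Ffalse := (Finset.range n).filter (fun v => α v = false) with hFdef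
  have hFle : Ffalse.card ≤ n - k := by
    by_contra hgt
    push_neg at hgt
    have hle : n - k + 1 ≤ Ffalse.card := hgt
    obtain ⟨S, hSsub, hScard⟩ := Finset.exists_subset_card_eq hle
    have hC := h (S.image (fun v => (v, true)))
      (Or.inr ⟨S, hSsub.trans (Finset.filter_subset _ _),
        by simpa using hScard, rfl⟩)
    obtain ⟨l, hl, he⟩ := hC
    simp only [Finset.mem_image] at hl
    obtain ⟨v, hv, rfl⟩ := hl
    have := hSsub hv
    simp only [hFdef, Finset.mem_filter] at this
    simp [this.2] at he
  -- true variables ≥ k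
  have htrue : k ≤ ((Finset.range n).filter (fun v => α v = true)).card := by
    have hsplit : ((Finset.range n).filter (fun v => α v = true)).card
        + Ffalse.card = n := by
      have := Finset.card_filter_add_card_filter_not (s := Finset.range n)
        (p := fun v => α v = true)
      simp only [Bool.not_eq_true, Finset.card_range] at this
      rw [hFdef]; exact this
    omega
  -- true set is union of true pairs
  set T := (Finset.range (n / 2)).filter (fun a => α (2 * a) = true) with hTdef
  have hkey : (Finset.range n).filter (fun v => α v = true)
      = T.biUnion (fun a => ({2 * a, 2 * a + 1} : Finset ℕ)) := by
    ext v
    simp only [Finset.mem_filter, Finset.mem_range, Finset.mem_biUnion, hTdef,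
      Finset.mem_insert, Finset.mem_singleton]
    constructor
    · rintro ⟨hv, hαv⟩
      obtain ⟨m, hm⟩ := hn
      refine ⟨v / 2, ⟨⟨by omega, ?_⟩, by omega⟩⟩
      have h1 : 2 * (v / 2) + 1 < n := by omega
      have hev : 2 * (v / 2) = v ∨ 2 * (v / 2) + 1 = v := by omega
      rcases hev with he | he
      · rwa [he]
      · rw [hpair _ h1, he]; exact hαv
    · rintro ⟨a, ⟨⟨ha, hαa⟩, hv⟩⟩
      have h1 : 2 * a + 1 < n := by obtain ⟨m, hm⟩ := hn; omega
      rcases hv with rfl | rfl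
      · exact ⟨by omega, hαa⟩
      · exact ⟨h1, by rw [← hpair _ h1]; exact hαa⟩
  have hcard2 : (T.biUnion (fun a => ({2 * a, 2 * a + 1} : Finset ℕ))).card
      = 2 * T.card := by
    rw [Finset.card_biUnion]
    · rw [Finset.sum_congr rfl (fun a _ =>
        show ({2 * a, 2 * a + 1} : Finset ℕ).card = 2 by
          rw [Finset.card_insert_of_notMem
            (by simp only [Finset.mem_singleton]; omega), Finset.card_singleton])]
      simp [mul_comm]
    · intro a _ b _ hab
      simp only [Finset.disjoint_left, Finset.mem_insert, Finset.mem_singleton]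
      omega
  have hTk : k + 1 ≤ 2 * T.card := by
    have : k ≤ 2 * T.card := by rw [← hcard2, ← hkey]; exact htrue
    obtain ⟨j, hj⟩ := hk
    omega
  have hTcard : (k + 1) / 2 ≤ T.card := by omega
  obtain ⟨A, hAsub, hAcard⟩ := Finset.exists_subset_card_eq hTcard
  have hC := h ((A.biUnion (fun a => ({2 * a, 2 * a + 1} : Finset ℕ))).image
      (fun v => (v, false)))
    (Or.inl (Or.inr ⟨A, hAsub.trans (Finset.filter_subset _ _), hAcard, rfl⟩))
  obtain ⟨l, hl, he⟩ := hC
  simp only [Finset.mem_image, Finset.mem_biUnion, Finset.mem_insert,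
    Finset.mem_singleton] at hl
  obtain ⟨v, ⟨a, haA, hv⟩, rfl⟩ := hl
  have haT := hAsub haA
  simp only [hTdef, Finset.mem_filter, Finset.mem_range] at haT
  have h1 : 2 * a + 1 < n := by obtain ⟨m, hm⟩ := hn; omega
  rcases hv with rfl | rfl
  · simp [haT.2] at he
  · rw [← hpair _ h1] at he
    simp [haT.2] at he
end

section
/- Let Φ be an unsatisfiable CNF in which every clause has at most 3 literals, and let k be arbitrary. Then (Φ,k) has a W[1]-parameterized tree-Resolution refutation of size at most 3^{k+1} (up to a constant factor independent of Φ and k). In particular, (Φ,k) has fpt-bounded refutations in W[1]-parameterized tree-Resolution. (Lemma 5 / Lemma in Section 3.2.) -/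
/-! ### Auxiliary lemmas -/

private def castTree {V : Type} [DecidableEq V] {F : Set (Clause V)} {C C' : Clause V}
    (h : C = C') (t : ResTree F C) : ResTree F C' := h ▸ t

private lemma castTree_size {V : Type} [DecidableEq V] {F : Set (Clause V)} {C C' : Clause V}
    (h : C = C') (t : ResTree F C) : (castTree h t).size = t.size := by
  subst h; rfl

private lemma tree_size_pos {V : Type} [DecidableEq V] {F : Set (Clause V)} {C : Clause V}
    (t : ResTree F C) : 1 ≤ t.size := by
  cases t <;> simp [ResTree.size] <;> omega

private lemma main_lemma (n k : ℕ) (Φ : Set (Clause ℕ))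
    (hvar : ∀ C ∈ Φ, ∀ l ∈ C, l.1 < n)
    (hcard3 : ∀ C ∈ Φ, C.card ≤ 3)
    (hunsat : ∀ α : ℕ → Bool, ¬ satCNF α Φ) :
    ∀ (b : ℕ) (S : Finset ℕ), S ⊆ Finset.range n → S.card + b = k + 1 →
      ∃ (D : Clause ℕ)
        (t : ResTree (Φ ∪ negClausesOn (Finset.range n) k ∪ posClausesOn (Finset.range n) k) D),
        D ⊆ S.image (fun v => (v, false)) ∧ t.size + 2 ≤ 2 * 3 ^ (b + 1) := by
  intro b
  induction b with
  | zero =>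
    intro S hS hSc
    refine ⟨S.image (fun v => (v, false)),
      .ax _ (Or.inl (Or.inr ⟨S, hS, by omega, rfl⟩)), le_refl _, ?_⟩
    show 1 + 2 ≤ 2 * 3 ^ 1
    norm_num
  | succ b ih =>
    intro S hS hSc
    -- the assignment setting exactly `S` true falsifies some clause of Φ
    have hfalse : ∃ C ∈ Φ, ∀ l ∈ C, ¬ ((fun v => decide (v ∈ S)) l.1 = l.2) := by
      have h := hunsat (fun v => decide (v ∈ S))
      simp only [satCNF, satClause] at h
      push_neg at h
      exact h
    obtain ⟨C, hCΦ, hne⟩ := hfalse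
    have hcond : ∀ l ∈ C, (l.2 = false ∧ l.1 ∈ S) ∨ (l.2 = true ∧ l.1 ∉ S ∧ l.1 < n) := by
      intro l hl
      have h1 := hvar C hCΦ l hl
      have h2 := hne l hl
      cases hb : l.2 with
      | false =>
        left
        refine ⟨rfl, ?_⟩
        by_contra hmem
        exact h2 (by simp [hmem, hb])
      | true =>
        right
        refine ⟨rfl, ?_, h1⟩
        intro hmem
        exact h2 (by simp [hmem, hb])
    -- inner induction over the number of positive literals remaining
    have inner : ∀ (m : ℕ) (E : Clause ℕ)
        (t : ResTree (Φ ∪ negClausesOn (Finset.range n) k ∪ posClausesOn (Finset.range n) k) E),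
        (∀ l ∈ E, (l.2 = false ∧ l.1 ∈ S) ∨ (l.2 = true ∧ l.1 ∉ S ∧ l.1 < n)) →
        (E.filter (fun l => l.2 = true)).card ≤ m →
        ∃ (D : Clause ℕ)
          (t' : ResTree (Φ ∪ negClausesOn (Finset.range n) k ∪ posClausesOn (Finset.range n) k) D),
          D ⊆ S.image (fun v => (v, false)) ∧
          t'.size + m + 2 ≤ t.size + 2 + m * (2 * 3 ^ (b + 1)) := by
      intro m
      induction m with
      | zero =>
        intro E t hE hfc
        refine ⟨E, t, ?_, by omega⟩
        intro l hl
        obtain ⟨v, bb⟩ := l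
        rcases hE _ hl with ⟨h2, h1⟩ | ⟨h2, _, _⟩
        · simp only at h2
          subst h2
          exact Finset.mem_image.2 ⟨v, h1, rfl⟩
        · exfalso
          have hmem : (v, bb) ∈ E.filter (fun l => l.2 = true) :=
            Finset.mem_filter.2 ⟨hl, h2⟩
          rw [Finset.card_eq_zero.mp (Nat.le_zero.mp hfc)] at hmem
          exact absurd hmem (Finset.notMem_empty _)
      | succ m ihm =>
        intro E t hE hfc
        by_cases hem : (E.filter (fun l => l.2 = true)) = ∅
        · obtain ⟨D, t', hsub, hsz⟩ := ihm E t hE (by simp [hem])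
          refine ⟨D, t', hsub, ?_⟩
          have h1 : (m + 1) * (2 * 3 ^ (b + 1)) = m * (2 * 3 ^ (b + 1)) + 2 * 3 ^ (b + 1) := by
            ring
          have h2 : 1 ≤ 3 ^ (b + 1) := Nat.one_le_pow _ _ (by norm_num)
          linarith
        · obtain ⟨l, hlf⟩ := Finset.nonempty_iff_ne_empty.mpr hem
          obtain ⟨v, bb⟩ := l
          have hlE : (v, bb) ∈ E := (Finset.mem_filter.mp hlf).1
          have hlt : bb = true := by
            have := (Finset.mem_filter.mp hlf).2
            simpa using this
          subst hlt
          have hvS : v ∉ S ∧ v < n := by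
            rcases hE _ hlE with ⟨h2, _⟩ | ⟨_, h3, h4⟩
            · simp at h2
            · exact ⟨h3, h4⟩
          obtain ⟨hvnotS, hvlt⟩ := hvS
          have hSv : insert v S ⊆ Finset.range n :=
            Finset.insert_subset (Finset.mem_range.2 hvlt) hS
          have hScv : (insert v S).card + b = k + 1 := by
            rw [Finset.card_insert_of_notMem hvnotS]; omega
          obtain ⟨Du, tu, hsubu, hszu⟩ := ih (insert v S) hSv hScv
          by_cases hvD : (v, false) ∈ Du
          · -- resolve `E` with `Du` on `v`
            have hcond' : ∀ l ∈ E.erase (v, true) ∪ Du.erase (v, false),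
                (l.2 = false ∧ l.1 ∈ S) ∨ (l.2 = true ∧ l.1 ∉ S ∧ l.1 < n) := by
              intro l hl
              rcases Finset.mem_union.mp hl with hl' | hl'
              · exact hE _ (Finset.mem_of_mem_erase hl')
              · have hlDu : l ∈ Du := Finset.mem_of_mem_erase hl'
                have hlne : l ≠ (v, false) := Finset.ne_of_mem_erase hl'
                obtain ⟨w, hw, heq⟩ := Finset.mem_image.mp (hsubu hlDu)
                left
                have hsnd : l.2 = false := by rw [← heq]
                have hfst : l.1 = w := by rw [← heq]
                refine ⟨hsnd, ?_⟩
                rw [hfst]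
                rcases Finset.mem_insert.mp hw with rfl | hwS
                · exfalso
                  apply hlne
                  rw [← heq]
                · exact hwS
            have hfc' : ((E.erase (v, true) ∪ Du.erase (v, false)).filter
                (fun l => l.2 = true)).card ≤ m := by
              have hss : (E.erase (v, true) ∪ Du.erase (v, false)).filter
                  (fun l => l.2 = true) ⊆ (E.filter (fun l => l.2 = true)).erase (v, true) := by
                intro l hl
                obtain ⟨hl1, hl2⟩ := Finset.mem_filter.mp hl
                rcases Finset.mem_union.mp hl1 with hl' | hl'
                · exact Finset.mem_erase.2 ⟨Finset.ne_of_mem_erase hl',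
                    Finset.mem_filter.2 ⟨Finset.mem_of_mem_erase hl', hl2⟩⟩
                · exfalso
                  obtain ⟨w, _, heq⟩ := Finset.mem_image.mp (hsubu (Finset.mem_of_mem_erase hl'))
                  have h3 : l.2 = false := by rw [← heq]
                  rw [hl2] at h3
                  exact Bool.noConfusion h3
              have h1 : (v, true) ∈ E.filter (fun l => l.2 = true) :=
                Finset.mem_filter.2 ⟨hlE, rfl⟩
              have h2 := Finset.card_le_card hss
              rw [Finset.card_erase_of_mem h1] at h2
              omega
            obtain ⟨D, t', hsub, hsz⟩ := ihm (E.erase (v, true) ∪ Du.erase (v, false))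
              (ResTree.res v (E.erase (v, true)) (Du.erase (v, false))
                (castTree (Finset.insert_erase hlE).symm t)
                (castTree (Finset.insert_erase hvD).symm tu)) hcond' hfc'
            refine ⟨D, t', hsub, ?_⟩
            have hsz3 : (ResTree.res v (E.erase (v, true)) (Du.erase (v, false))
                (castTree (Finset.insert_erase hlE).symm t)
                (castTree (Finset.insert_erase hvD).symm tu)).size = t.size + tu.size + 1 := by
              simp [ResTree.size, castTree_size]
            rw [hsz3] at hsz
            have h1 : (m + 1) * (2 * 3 ^ (b + 1)) = m * (2 * 3 ^ (b + 1)) + 2 * 3 ^ (b + 1) := by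
              ring
            linarith
          · -- `Du` does not mention `v` negatively, so it already works
            have hsub' : Du ⊆ S.image (fun v => (v, false)) := by
              intro l hl
              obtain ⟨w, hw, heq⟩ := Finset.mem_image.mp (hsubu hl)
              rcases Finset.mem_insert.mp hw with rfl | hwS
              · exfalso
                rw [← heq] at hl
                exact hvD hl
              · exact Finset.mem_image.2 ⟨w, hwS, heq⟩
            refine ⟨Du, tu, hsub', ?_⟩
            have h1 : (m + 1) * (2 * 3 ^ (b + 1)) = m * (2 * 3 ^ (b + 1)) + 2 * 3 ^ (b + 1) := by
              ring
            have h2 := tree_size_pos t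
            have h3 : m ≤ m * (2 * 3 ^ (b + 1)) :=
              Nat.le_mul_of_pos_right m (by positivity)
            linarith
    -- apply the inner induction to the falsified clause `C`
    have hCmem : C ∈ Φ ∪ negClausesOn (Finset.range n) k ∪ posClausesOn (Finset.range n) k :=
      Or.inl (Or.inl hCΦ)
    have hfcC : (C.filter (fun l => l.2 = true)).card ≤ 3 :=
      le_trans (Finset.card_le_card (Finset.filter_subset _ _)) (hcard3 C hCΦ)
    obtain ⟨D, t', hsub, hsz⟩ := inner 3 C (.ax C hCmem) hcond hfcC
    refine ⟨D, t', hsub, ?_⟩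
    have hax : (ResTree.ax (F := Φ ∪ negClausesOn (Finset.range n) k ∪
        posClausesOn (Finset.range n) k) C hCmem).size = 1 := rfl
    rw [hax] at hsz
    have hpow : (3 : ℕ) ^ (b + 1 + 1) = 3 ^ (b + 1) * 3 := pow_succ _ _
    linarith

/-- Lemma in Section 3.2: there is a constant `c` (independent of `Φ`,
`n` and `k`) such that for every unsatisfiable CNF `Φ` in the variables `x_0, …, x_{n-1}`
all of whose clauses have at most 3 literals, and every `k`, the pair `(Φ, k)` has a
`W[1]`-parameterized tree-Resolution refutation — i.e. a tree-Resolution refutation of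
`Φ` together with all clauses `¬x_{i₁} ∨ ⋯ ∨ ¬x_{i_{k+1}}` and all clauses
`x_{i₁} ∨ ⋯ ∨ x_{i_{n-k+1}}` — of size at most `c * 3^(k+1)`. In particular, `(Φ, k)`
has fpt-bounded refutations in `W[1]`-parameterized tree-Resolution. -/
theorem contradiction_3cnf_fpt_bounded :
    ∃ c : ℕ, ∀ (n k : ℕ) (Φ : Set (Clause ℕ)),
      (∀ C ∈ Φ, ∀ l ∈ C, l.1 < n) →
      (∀ C ∈ Φ, C.card ≤ 3) →
      (∀ α : ℕ → Bool, ¬ satCNF α Φ) →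
      ∃ t : ResTree (Φ ∪ negClausesOn (Finset.range n) k ∪ posClausesOn (Finset.range n) k)
          (∅ : Clause ℕ), t.size ≤ c * 3 ^ (k + 1) := by
  refine ⟨6, ?_⟩
  intro n k Φ hvar hcard hunsat
  obtain ⟨D, t, hsub, hsz⟩ := main_lemma n k Φ hvar hcard hunsat (k + 1) ∅ (by simp) (by simp)
  have hD : D = ∅ := Finset.subset_empty.mp (by simpa using hsub)
  subst hD
  refine ⟨t, ?_⟩
  have hpow : (3 : ℕ) ^ (k + 1 + 1) = 3 ^ (k + 1) * 3 := pow_succ _ _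
  linarith
end

section
/- Let Φ be a CNF in variables x_1,…,x_n, let 0 ≤ k ≤ n, and let Φ' be the embedded CNF of (Φ,k). Then Φ' is satisfiable if and only if Φ has a satisfying assignment of weight exactly k. In particular, if (Φ,k) is a weighted parameterized contradiction (Φ has no satisfying assignment of weight exactly k), then Φ' is an ordinary contradiction (unsatisfiable). -/
/-- Variables of the embedded CNF: original variables `x_i`, pigeonhole variables
`r_{x_i,j}` and `s_{x_i,j}`. -/
abbrev EV : Type := ℕ ⊕ (ℕ × ℕ ⊕ ℕ × ℕ)

def xvar (i : ℕ) : EV := Sum.inl i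
def rvar (i j : ℕ) : EV := Sum.inr (Sum.inl (i, j))
def svar (i j : ℕ) : EV := Sum.inr (Sum.inr (i, j))

/-- The embedded CNF `Φ'` of `(Φ, k)` (for `Φ` a CNF in the variables `x_0, …, x_{n-1}`):
`Φ` together with the pigeonhole clauses
`¬x_i ∨ r_{x_i,1} ∨ ⋯ ∨ r_{x_i,k}`, `¬x_i ∨ ¬r_{x_i,j} ∨ ¬r_{x_l,j}` (`i ≠ l`, `j < k`),
`x_i ∨ s_{x_i,1} ∨ ⋯ ∨ s_{x_i,n-k}`, and `x_i ∨ ¬s_{x_i,j} ∨ ¬s_{x_l,j}` (`i ≠ l`, `j < n-k`). -/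
def EmbeddedCNF (Φ : Set (Clause ℕ)) (n k : ℕ) : Set (Clause EV) :=
  {C | ∃ D ∈ Φ, C = D.image (fun l => (xvar l.1, l.2))} ∪
  {C | ∃ i, i < n ∧
    C = insert (xvar i, false) ((Finset.range k).image (fun j => (rvar i j, true)))} ∪
  {C | ∃ i l j, i < n ∧ l < n ∧ i ≠ l ∧ j < k ∧
    C = {(xvar i, false), (rvar i j, false), (rvar l j, false)}} ∪
  {C | ∃ i, i < n ∧
    C = insert (xvar i, true) ((Finset.range (n - k)).image (fun j => (svar i j, true)))} ∪
  {C | ∃ i l j, i < n ∧ l < n ∧ i ≠ l ∧ j < n - k ∧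
    C = {(xvar i, true), (svar i j, false), (svar l j, false)}}

/-!
A satisfying assignment of `Φ'` makes the `r`-variables place the true `x_i` into pairwise
distinct holes `j < k`, and the `s`-variables place the false `x_i` into pairwise distinct holes
`j < n - k`; by the pigeonhole principle at most `k` of the `x_i` are true and at most `n - k`
are false, so exactly `k` are true. Conversely, an assignment of weight `k` extends to `Φ'` by
numbering its true variables with `0, …, k-1` and its false ones with `0, …, n-k-1`.
-/

open Finset

section Clauses

variable {V W : Type}

@[simp]
lemma satClause_insert [DecidableEq V] (α : V → Bool) (l : V × Bool) (C : Clause V) :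
    satClause α (insert l C) ↔ α l.1 = l.2 ∨ satClause α C := by
  simp [satClause]

@[simp]
lemma satClause_singleton (α : V → Bool) (l : V × Bool) :
    satClause α {l} ↔ α l.1 = l.2 := by
  simp [satClause]

def renameCNF [DecidableEq W] (g : V → W) (Φ : Set (Clause V)) : Set (Clause W) :=
  {C | ∃ D ∈ Φ, C = D.image (fun l => (g l.1, l.2))}

lemma satClause_rename_iff [DecidableEq W] (g : V → W) (β : W → Bool) (D : Clause V) :
    satClause β (D.image fun l => (g l.1, l.2)) ↔ satClause (β ∘ g) D := by
  simp only [satClause, Finset.exists_mem_image, Function.comp_apply]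

lemma satCNF_renameCNF_iff [DecidableEq W] (g : V → W) (β : W → Bool) (Φ : Set (Clause V)) :
    satCNF β (renameCNF g Φ) ↔ satCNF (β ∘ g) Φ := by
  constructor
  · intro h D hD
    exact (satClause_rename_iff g β D).mp (h _ ⟨D, hD, rfl⟩)
  · rintro h _ ⟨D, hD, rfl⟩
    exact (satClause_rename_iff g β D).mpr (h D hD)

lemma satCNF_union_iff (α : V → Bool) (F G : Set (Clause V)) :
    satCNF α (F ∪ G) ↔ satCNF α F ∧ satCNF α G := by
  simp [satCNF, or_imp, forall_and]

end Clauses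

lemma Finset.exists_injOn_range_of_card_le {α : Type*} (s : Finset α) {m : ℕ} (h : #s ≤ m) :
    ∃ f : α → ℕ, (∀ a ∈ s, f a < m) ∧ Set.InjOn f s := by
  classical
  refine ⟨fun a => if ha : a ∈ s then s.equivFin ⟨a, ha⟩ else 0, fun a ha => ?_, ?_⟩
  · simpa [ha] using lt_of_lt_of_le (s.equivFin ⟨a, ha⟩).isLt h
  · intro a ha a' ha' e
    simp only [Finset.mem_coe] at ha ha'
    simp only [ha, ha', dite_true] at e
    simpa using s.equivFin.injective (Fin.ext e)

section Pigeonhole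

def PlacesInHoles (n m : ℕ) (a : ℕ → Bool) (R : ℕ → ℕ → Bool) : Prop :=
  (∀ i < n, a i → ∃ j < m, R i j) ∧
  ∀ i < n, ∀ l < n, i ≠ l → ∀ j < m, a i → R i j → R l j = false

variable {n m : ℕ} {a : ℕ → Bool} {R : ℕ → ℕ → Bool}

lemma PlacesInHoles.weight_le (h : PlacesInHoles n m a R) : weight n a ≤ m := by
  have := card_le_card_of_forall_subsingleton (fun i j => R i j = true)
    (s := {i ∈ range n | a i}) (t := range m) ?_ ?_
  · simpa [weight] using this
  · intro i hi
    simp only [mem_filter, mem_range] at hi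
    simpa using h.1 i hi.1 hi.2
  · rintro j hj i ⟨hi, hij⟩ l ⟨hl, hlj⟩
    simp only [mem_filter, mem_range] at hi hl hj
    by_contra hne
    simp [h.2 i hi.1 l hl.1 hne j hj hi.2 hij] at hlj

lemma exists_placesInHoles_of_weight_le (h : weight n a ≤ m) :
    ∃ R, PlacesInHoles n m a R := by
  classical
  obtain ⟨f, hf_lt, hf_inj⟩ := Finset.exists_injOn_range_of_card_le _ h
  refine ⟨fun i j => decide (i ∈ {i ∈ range n | a i} ∧ f i = j), ?_, ?_⟩
  · intro i hi hai
    exact ⟨f i, hf_lt i (by simp [hi, hai]), by simp [hi, hai]⟩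
  · intro i hi l hl hne j hj hai hij
    simp only [decide_eq_true_eq] at hij
    simp only [decide_eq_false_iff_not, not_and]
    intro hl' hlj
    exact hne (hf_inj hij.1 hl' (hij.2.trans hlj.symm))

end Pigeonhole

section PigeonClauses

variable {V : Type} [DecidableEq V]

def pigeonClauses (x : ℕ → V) (p : ℕ → ℕ → V) (n m : ℕ) (b : Bool) : Set (Clause V) :=
  {C | ∃ i, i < n ∧ C = insert (x i, b) ((range m).image fun j => (p i j, true))} ∪
  {C | ∃ i l j, i < n ∧ l < n ∧ i ≠ l ∧ j < m ∧ C = {(x i, b), (p i j, false), (p l j, false)}}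

lemma satCNF_pigeonClauses_iff (x : ℕ → V) (p : ℕ → ℕ → V) (n m : ℕ) (b : Bool)
    (β : V → Bool) :
    satCNF β (pigeonClauses x p n m b) ↔
      PlacesInHoles n m (fun i => β (x i) != b) (fun i j => β (p i j)) := by
  rw [pigeonClauses, satCNF_union_iff, PlacesInHoles]
  apply and_congr
  · constructor
    · intro h i hi hxi
      rw [bne_iff_ne] at hxi
      simpa [satClause, hxi] using h _ ⟨i, hi, rfl⟩
    · rintro h _ ⟨i, hi, rfl⟩
      by_cases hxi : β (x i) = b
      · simp [hxi]
      · simpa [satClause, hxi] using h i hi (by simpa using hxi)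
  · constructor
    · intro h i hi l hl hne j hj hxi hpi
      rw [bne_iff_ne] at hxi
      simpa [hxi, hpi] using h _ ⟨i, l, j, hi, hl, hne, hj, rfl⟩
    · rintro h _ ⟨i, l, j, hi, hl, hne, hj, rfl⟩
      by_cases hxi : β (x i) = b
      · simp [hxi]
      · by_cases hpi : β (p i j) = true
        · simp [h i hi l hl hne j hj (by simpa using hxi) hpi]
        · simp [hpi]

end PigeonClauses

lemma weight_add_weight_not (n : ℕ) (α : ℕ → Bool) :
    weight n α + weight n (fun i => !α i) = n := by
  simpa [weight] using card_filter_add_card_filter_not (s := range n) (fun i => α i = true)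

lemma embeddedCNF_eq (Φ : Set (Clause ℕ)) (n k : ℕ) :
    EmbeddedCNF Φ n k = renameCNF xvar Φ ∪ pigeonClauses xvar rvar n k false ∪
      pigeonClauses xvar svar n (n - k) true := by
  simp only [EmbeddedCNF, renameCNF, pigeonClauses, Set.union_assoc]

lemma satCNF_embeddedCNF_iff (Φ : Set (Clause ℕ)) (n k : ℕ) (β : EV → Bool) :
    satCNF β (EmbeddedCNF Φ n k) ↔
      satCNF (β ∘ xvar) Φ ∧
      PlacesInHoles n k (fun i => β (xvar i)) (fun i j => β (rvar i j)) ∧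
      PlacesInHoles n (n - k) (fun i => !β (xvar i)) (fun i j => β (svar i j)) := by
  simp only [embeddedCNF_eq, satCNF_union_iff, satCNF_renameCNF_iff, satCNF_pigeonClauses_iff,
    Bool.bne_false, Bool.bne_true, and_assoc]

lemma exists_satCNF_embeddedCNF_iff (Φ : Set (Clause ℕ)) {n k : ℕ} (hkn : k ≤ n) :
    (∃ β : EV → Bool, satCNF β (EmbeddedCNF Φ n k)) ↔
      ∃ α : ℕ → Bool, satCNF α Φ ∧ weight n α = k := by
  constructor
  · rintro ⟨β, hβ⟩
    obtain ⟨hΦ, hr, hs⟩ := (satCNF_embeddedCNF_iff Φ n k β).mp hβ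
    have hsplit : weight n (fun i => β (xvar i)) + weight n (fun i => !β (xvar i)) = n :=
      weight_add_weight_not n _
    exact ⟨fun i => β (xvar i), hΦ, by have := hr.weight_le; have := hs.weight_le; omega⟩
  · rintro ⟨α, hΦ, hw⟩
    have hsplit := weight_add_weight_not n α
    obtain ⟨R, hR⟩ := exists_placesInHoles_of_weight_le (m := k) hw.le
    obtain ⟨S, hS⟩ := exists_placesInHoles_of_weight_le (n := n) (m := n - k)
      (a := fun i => !α i) (by omega)
    exact ⟨Sum.elim α (Sum.elim (fun p => R p.1 p.2) (fun p => S p.1 p.2)),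
      (satCNF_embeddedCNF_iff Φ n k _).mpr ⟨hΦ, hR, hS⟩⟩

theorem embedded_cnf_satisfiable_iff_general (Φ : Set (Clause ℕ)) (n k : ℕ) (hkn : k ≤ n) :
    ((∃ β : EV → Bool, satCNF β (EmbeddedCNF Φ n k)) ↔
      (∃ α : ℕ → Bool, satCNF α Φ ∧ weight n α = k)) ∧
    ((¬ ∃ α : ℕ → Bool, satCNF α Φ ∧ weight n α = k) →
      ∀ β : EV → Bool, ¬ satCNF β (EmbeddedCNF Φ n k)) :=
  have key := exists_satCNF_embeddedCNF_iff Φ hkn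
  ⟨key, fun hnone β hβ => hnone (key.mp ⟨β, hβ⟩)⟩

/-- for a CNF `Φ` in the variables `x_0, …, x_{n-1}` and `0 ≤ k ≤ n`,
the embedded CNF `Φ'` of `(Φ, k)` is satisfiable if and only if `Φ` has a satisfying
assignment of weight exactly `k`. In particular, if `(Φ, k)` is a weighted parameterized
contradiction then `Φ'` is an ordinary contradiction (unsatisfiable). -/
theorem embedded_cnf_satisfiable_iff (Φ : Set (Clause ℕ)) (n k : ℕ) (hkn : k ≤ n)
    (hvars : ∀ C ∈ Φ, ∀ l ∈ C, l.1 < n) :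
    ((∃ β : EV → Bool, satCNF β (EmbeddedCNF Φ n k)) ↔
      (∃ α : ℕ → Bool, satCNF α Φ ∧ weight n α = k)) ∧
    ((¬ ∃ α : ℕ → Bool, satCNF α Φ ∧ weight n α = k) →
      ∀ β : EV → Bool, ¬ satCNF β (EmbeddedCNF Φ n k)) :=
  embedded_cnf_satisfiable_iff_general Φ n k hkn
end

section
/- For every odd k and even n with k ≤ n, the embedded CNF Ψ'_{n,k} of (Ψ_{n,k},k) is unsatisfiable. -/
lemma even_filter_card (g : ℕ → Bool) (m : ℕ)
    (h : ∀ i, 2 * i + 1 < 2 * m → g (2 * i) = g (2 * i + 1)) :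
    Even (((Finset.range (2 * m)).filter (fun i => g i = true)).card) := by
  induction m with
  | zero => simp
  | succ m ih =>
    have h2 : (2 : ℕ) * (m + 1) = (2 * m + 1) + 1 := by ring
    have hg : g (2 * m) = g (2 * m + 1) := h m (by omega)
    rw [h2, Finset.range_add_one, Finset.range_add_one, Finset.filter_insert, Finset.filter_insert]
    have ihm := ih (fun i hi => h i (by omega))
    by_cases hv : g (2 * m) = true
    · rw [if_pos (hg ▸ hv), if_pos hv]
      rw [Finset.card_insert_of_notMem (by simp),
        Finset.card_insert_of_notMem (by simp)]
      obtain ⟨r, hr⟩ := ihm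
      exact ⟨r + 1, by omega⟩
    · rw [if_neg (hg ▸ hv), if_neg hv]
      exact ihm

/-- for every odd `k` and even `n` with `k ≤ n`, the embedded CNF
`Ψ'_{n,k}` of `(Ψ_{n,k}, k)` is unsatisfiable. -/
theorem embedded_psi_unsatisfiable (n k : ℕ) (hk : Odd k) (hn : Even n) (hkn : k ≤ n)
    (β : EV → Bool) :
    ¬ satCNF β (EmbeddedCNF (Psi n) n k) := by
  intro hsat
  classical
  set T := (Finset.range n).filter (fun i => β (xvar i) = true) with hTdef
  set Fs := (Finset.range n).filter (fun i => ¬ (β (xvar i) = true)) with hFdef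
  -- |T| ≤ k
  have hexT : ∀ i, ∃ j, i ∈ T → j < k ∧ β (rvar i j) = true := by
    intro i
    by_cases hi : i ∈ T
    · have hin : i < n := Finset.mem_range.mp (Finset.mem_filter.mp hi).1
      have hitrue : β (xvar i) = true := (Finset.mem_filter.mp hi).2
      have hC : (insert ((xvar i, false))
          ((Finset.range k).image (fun j => (rvar i j, true))) : Clause EV)
          ∈ EmbeddedCNF (Psi n) n k :=
        Or.inl (Or.inl (Or.inl (Or.inr ⟨i, hin, rfl⟩)))
      obtain ⟨l, hl, hlv⟩ := hsat _ hC
      rcases Finset.mem_insert.mp hl with rfl | hl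
      · simp [hitrue] at hlv
      · obtain ⟨j, hj, rfl⟩ := Finset.mem_image.mp hl
        exact ⟨j, fun _ => ⟨Finset.mem_range.mp hj, hlv⟩⟩
    · exact ⟨0, fun h => absurd h hi⟩
  choose f hf using hexT
  have hTk : T.card ≤ k := by
    rw [← Finset.card_range k]
    apply Finset.card_le_card_of_injOn f
    · intro i hi; exact Finset.mem_range.mpr (hf i hi).1
    · intro i hi l hl hfe
      by_contra hne
      have hC : ({(xvar i, false), (rvar i (f i), false), (rvar l (f i), false)} : Clause EV)
          ∈ EmbeddedCNF (Psi n) n k :=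
        Or.inl (Or.inl (Or.inr ⟨i, l, f i,
          Finset.mem_range.mp (Finset.mem_filter.mp hi).1,
          Finset.mem_range.mp (Finset.mem_filter.mp hl).1, hne, (hf i hi).1, rfl⟩))
      obtain ⟨lit, hlit, hlv⟩ := hsat _ hC
      simp only [Finset.mem_insert, Finset.mem_singleton] at hlit
      rcases hlit with rfl | rfl | rfl
      · exact absurd hlv (by simp [(Finset.mem_filter.mp hi).2])
      · exact absurd hlv (by simp [(hf i hi).2])
      · exact absurd hlv (by simp [hfe ▸ (hf l hl).2])
  -- |Fs| ≤ n - k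
  have hexF : ∀ i, ∃ j, i ∈ Fs → j < n - k ∧ β (svar i j) = true := by
    intro i
    by_cases hi : i ∈ Fs
    · have hin : i < n := Finset.mem_range.mp (Finset.mem_filter.mp hi).1
      have hif : ¬ (β (xvar i) = true) := (Finset.mem_filter.mp hi).2
      have hC : (insert ((xvar i, true))
          ((Finset.range (n - k)).image (fun j => (svar i j, true))) : Clause EV)
          ∈ EmbeddedCNF (Psi n) n k :=
        Or.inl (Or.inr ⟨i, hin, rfl⟩)
      obtain ⟨l, hl, hlv⟩ := hsat _ hC
      rcases Finset.mem_insert.mp hl with rfl | hl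
      · exact absurd hlv hif
      · obtain ⟨j, hj, rfl⟩ := Finset.mem_image.mp hl
        exact ⟨j, fun _ => ⟨Finset.mem_range.mp hj, hlv⟩⟩
    · exact ⟨0, fun h => absurd h hi⟩
  choose g hg using hexF
  have hFk : Fs.card ≤ n - k := by
    rw [← Finset.card_range (n - k)]
    apply Finset.card_le_card_of_injOn g
    · intro i hi; exact Finset.mem_range.mpr (hg i hi).1
    · intro i hi l hl hfe
      by_contra hne
      have hC : ({(xvar i, true), (svar i (g i), false), (svar l (g i), false)} : Clause EV)
          ∈ EmbeddedCNF (Psi n) n k :=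
        Or.inr ⟨i, l, g i,
          Finset.mem_range.mp (Finset.mem_filter.mp hi).1,
          Finset.mem_range.mp (Finset.mem_filter.mp hl).1, hne, (hg i hi).1, rfl⟩
      obtain ⟨lit, hlit, hlv⟩ := hsat _ hC
      simp only [Finset.mem_insert, Finset.mem_singleton] at hlit
      rcases hlit with rfl | rfl | rfl
      · exact absurd hlv (by simp [(Finset.mem_filter.mp hi).2])
      · exact absurd hlv (by simp [(hg i hi).2])
      · exact absurd hlv (by simp [hfe ▸ (hg l hl).2])
  have hsum : T.card + Fs.card = n := by
    rw [hTdef, hFdef, Finset.card_filter_add_card_filter_not, Finset.card_range]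
  have hTeq : T.card = k := by omega
  -- pairs equal
  have hpair : ∀ i, 2 * i + 1 < n → β (xvar (2 * i)) = β (xvar (2 * i + 1)) := by
    intro i hi
    have hD1 : ({(2 * i, true), (2 * i + 1, false)} : Clause ℕ) ∈ Psi n :=
      ⟨i, hi, Or.inl rfl⟩
    have hD2 : ({(2 * i + 1, true), (2 * i, false)} : Clause ℕ) ∈ Psi n :=
      ⟨i, hi, Or.inr rfl⟩
    have hC1 : ({(xvar (2 * i), true), (xvar (2 * i + 1), false)} : Clause EV)
        ∈ EmbeddedCNF (Psi n) n k :=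
      Or.inl (Or.inl (Or.inl (Or.inl ⟨_, hD1, by
        simp [Finset.image_insert, Finset.image_singleton]⟩)))
    have hC2 : ({(xvar (2 * i + 1), true), (xvar (2 * i), false)} : Clause EV)
        ∈ EmbeddedCNF (Psi n) n k :=
      Or.inl (Or.inl (Or.inl (Or.inl ⟨_, hD2, by
        simp [Finset.image_insert, Finset.image_singleton]⟩)))
    obtain ⟨l1, hl1, hv1⟩ := hsat _ hC1
    obtain ⟨l2, hl2, hv2⟩ := hsat _ hC2
    simp only [Finset.mem_insert, Finset.mem_singleton] at hl1 hl2
    rcases hl1 with rfl | rfl <;> rcases hl2 with rfl | rfl <;> simp_all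
  -- evenness
  obtain ⟨m, rfl⟩ := hn
  have hm2 : m + m = 2 * m := by ring
  have heven : Even (T.card) := by
    rw [hTdef, hm2]
    exact even_filter_card (fun i => β (xvar i)) m (fun i hi => hpair i (by omega))
  rw [hTeq] at heven
  exact (Nat.not_even_iff_odd.mpr hk) heven
end
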